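/- arXiv:1706.00964 — 2 statements merged into one kernel-verified Lean document; each statement's English description precedes it below -/
import Mathlib

section
/- Let F be a field of characteristic not 3 and let [x,y] = x₁y₄ − (1/3)x₂y₃ + (1/3)x₃y₂ − x₄y₁ on the space V = F⁴ of binary cubic forms. Then for every l ∈ GL₂(F) and all x, y ∈ V, one has [x·l, y·l] = det(l)⁻¹·[x,y], where x·l denotes the twisted action (f·l)(u,v) = det(l)·f((u,v)l⁻¹). -/
open Matrix

noncomputable section

/-- Discriminant of the binary cubic form `x₁u³ + x₂u²v + x₃uv² + x₄v³`. -/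
def disc {F : Type*} [CommRing F] (x : F × F × F × F) : F :=
  match x with
  | (x₁, x₂, x₃, x₄) =>
    x₂ ^ 2 * x₃ ^ 2 + 18 * x₁ * x₂ * x₃ * x₄ - 4 * x₂ ^ 3 * x₄
      - 4 * x₁ * x₃ ^ 3 - 27 * x₁ ^ 2 * x₄ ^ 2

/-- Coefficients of the binary cubic form `(u,v) ↦ f((u,v)·M)` obtained from
`f(u,v) = x₁u³ + x₂u²v + x₃uv² + x₄v³` by the linear substitution given by the
matrix `M`, where `(u,v)·M = (u·M₀₀ + v·M₁₀, u·M₀₁ + v·M₁₁)`. -/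
def subst {F : Type*} [CommRing F] (x : F × F × F × F)
    (M : Matrix (Fin 2) (Fin 2) F) : F × F × F × F :=
  match x with
  | (x₁, x₂, x₃, x₄) =>
    let a := M 0 0; let b := M 0 1; let c := M 1 0; let d := M 1 1
    (x₁ * a ^ 3 + x₂ * a ^ 2 * b + x₃ * a * b ^ 2 + x₄ * b ^ 3,
     3 * x₁ * a ^ 2 * c + x₂ * (a ^ 2 * d + 2 * a * b * c)
       + x₃ * (b ^ 2 * c + 2 * a * b * d) + 3 * x₄ * b ^ 2 * d,
     3 * x₁ * a * c ^ 2 + x₂ * (b * c ^ 2 + 2 * a * c * d)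
       + x₃ * (a * d ^ 2 + 2 * b * c * d) + 3 * x₄ * b * d ^ 2,
     x₁ * c ^ 3 + x₂ * c ^ 2 * d + x₃ * c * d ^ 2 + x₄ * d ^ 3)

/-- The twisted right action of `GL₂` on binary cubic forms:
`(f·g)(u,v) = det(g) · f((u,v)·g⁻¹)`, on the level of coefficient vectors. -/
def act {F : Type*} [Field F] (x : F × F × F × F) (g : GL (Fin 2) F) :
    F × F × F × F :=
  ((g : Matrix (Fin 2) (Fin 2) F).det) •
    subst x ((g⁻¹ : GL (Fin 2) F) : Matrix (Fin 2) (Fin 2) F)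

/-- The bilinear pairing `[x,y] = x₁y₄ − x₂y₃/3 + x₃y₂/3 − x₄y₁` on the space
of binary cubic forms. -/
def pairing {F : Type*} [Field F] (x y : F × F × F × F) : F :=
  match x, y with
  | (x₁, x₂, x₃, x₄), (y₁, y₂, y₃, y₄) =>
    x₁ * y₄ - x₂ * y₃ / 3 + x₃ * y₂ / 3 - x₄ * y₁

private lemma pairing_subst {F : Type*} [Field F] (h3 : (3 : F) ≠ 0)
    (M : Matrix (Fin 2) (Fin 2) F) (x y : F × F × F × F) :
    pairing (subst x M) (subst y M) = (M.det) ^ 3 * pairing x y := by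
  obtain ⟨x₁, x₂, x₃, x₄⟩ := x
  obtain ⟨y₁, y₂, y₃, y₄⟩ := y
  simp only [pairing, subst, Matrix.det_fin_two]
  field_simp
  ring

/-- over a field of characteristic not 3, the pairing transforms
under the twisted `GL₂`-action by `[x·l, y·l] = det(l)⁻¹·[x,y]`. -/
theorem pairing_act {F : Type*} [Field F] (h3 : (3 : F) ≠ 0)
    (l : GL (Fin 2) F) (x y : F × F × F × F) :
    pairing (act x l) (act y l) =
      ((l : Matrix (Fin 2) (Fin 2) F).det)⁻¹ * pairing x y := by
  have hD : (l : Matrix (Fin 2) (Fin 2) F).det ≠ 0 :=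
    (Matrix.isUnit_iff_isUnit_det _).mp l.isUnit |>.ne_zero
  have hinv : ((l⁻¹ : GL (Fin 2) F) : Matrix (Fin 2) (Fin 2) F).det
      = ((l : Matrix (Fin 2) (Fin 2) F).det)⁻¹ := by
    have : ((l⁻¹ : GL (Fin 2) F) : Matrix (Fin 2) (Fin 2) F)
        = ((l : Matrix (Fin 2) (Fin 2) F))⁻¹ := by
      simp [Matrix.coe_units_inv]
    rw [this, Matrix.det_nonsing_inv, Ring.inverse_eq_inv']
  obtain ⟨x₁, x₂, x₃, x₄⟩ := x
  obtain ⟨y₁, y₂, y₃, y₄⟩ := y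
  simp only [act, Prod.smul_def, smul_eq_mul, pairing, subst]
  have key := pairing_subst h3 ((l⁻¹ : GL (Fin 2) F) : Matrix (Fin 2) (Fin 2) F)
    (x₁, x₂, x₃, x₄) (y₁, y₂, y₃, y₄)
  simp only [pairing, subst] at key
  set D := (l : Matrix (Fin 2) (Fin 2) F).det with hDdef
  set a := ((l⁻¹ : GL (Fin 2) F) : Matrix (Fin 2) (Fin 2) F) 0 0
  set b := ((l⁻¹ : GL (Fin 2) F) : Matrix (Fin 2) (Fin 2) F) 0 1
  set c := ((l⁻¹ : GL (Fin 2) F) : Matrix (Fin 2) (Fin 2) F) 1 0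
  set d := ((l⁻¹ : GL (Fin 2) F) : Matrix (Fin 2) (Fin 2) F) 1 1
  have h2 : ((l⁻¹ : GL (Fin 2) F) : Matrix (Fin 2) (Fin 2) F).det = a * d - b * c :=
    Matrix.det_fin_two _
  rw [hinv] at key
  have expand : ∀ (p q r s t u v w : F),
      (D * p) * (D * w) - (D * q) * (D * v) / 3 + (D * r) * (D * u) / 3
        - (D * s) * (D * t)
      = D ^ 2 * (p * w - q * v / 3 + r * u / 3 - s * t) := by
    intro p q r s t u v w; ring
  rw [expand, key]
  field_simp
end
end

section
/- Let k be an algebraically closed field of characteristic 0. The set of nonzero binary cubic forms over k with zero discriminant decomposes into exactly two orbits under the twisted GL₂(k)-action (f·g)(u,v) = det(g)·f((u,v)g⁻¹): the orbit of v³ (forms that are a scalar times the cube of a linear form) and the orbit of uv² (forms of the shape ℓ²m with ℓ, m non-proportional linear forms). -/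
open Matrix

noncomputable section

section Aux

variable {k : Type*} [Field k]

lemma subst_mk (x₁ x₂ x₃ x₄ a b c d : k) :
    subst (x₁, x₂, x₃, x₄) !![a, b; c, d] =
    (x₁ * a ^ 3 + x₂ * a ^ 2 * b + x₃ * a * b ^ 2 + x₄ * b ^ 3,
     3 * x₁ * a ^ 2 * c + x₂ * (a ^ 2 * d + 2 * a * b * c)
       + x₃ * (b ^ 2 * c + 2 * a * b * d) + 3 * x₄ * b ^ 2 * d,
     3 * x₁ * a * c ^ 2 + x₂ * (b * c ^ 2 + 2 * a * c * d)
       + x₃ * (a * d ^ 2 + 2 * b * c * d) + 3 * x₄ * b * d ^ 2,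
     x₁ * c ^ 3 + x₂ * c ^ 2 * d + x₃ * c * d ^ 2 + x₄ * d ^ 3) := rfl

lemma smul_mk (e p q r s : k) :
    e • ((p, q, r, s) : k × k × k × k) = (e * p, e * q, e * r, e * s) := rfl

lemma orbit_iff (x₀ x : k × k × k × k) :
    (∃ g : GL (Fin 2) k, act x₀ g = x) ↔
    ∃ A B C D : k, A * D - B * C ≠ 0 ∧
      (A * D - B * C)⁻¹ • subst x₀ !![A, B; C, D] = x := by
  constructor
  · rintro ⟨g, rfl⟩
    set M := ((g⁻¹ : GL (Fin 2) k) : Matrix (Fin 2) (Fin 2) k) with hMdef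
    have hmul : ((g : Matrix (Fin 2) (Fin 2) k)) * M = 1 := by
      rw [hMdef, ← Matrix.GeneralLinearGroup.coe_mul, mul_inv_cancel,
        Matrix.GeneralLinearGroup.coe_one]
    have hdet : ((g : Matrix (Fin 2) (Fin 2) k)).det * M.det = 1 := by
      rw [← Matrix.det_mul, hmul, Matrix.det_one]
    have hMdet : M.det ≠ 0 := by
      intro h0; rw [h0, mul_zero] at hdet; exact zero_ne_one hdet
    have hg : ((g : Matrix (Fin 2) (Fin 2) k)).det = (M.det)⁻¹ :=
      eq_inv_of_mul_eq_one_left (by linear_combination hdet)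
    refine ⟨M 0 0, M 0 1, M 1 0, M 1 1, ?_, ?_⟩
    · rw [← Matrix.det_fin_two]; exact hMdet
    · rw [← Matrix.det_fin_two, ← hg, act, ← Matrix.eta_fin_two]
  · rintro ⟨A, B, C, D, h, rfl⟩
    have hdet : (!![A, B; C, D]).det ≠ 0 := by rwa [Matrix.det_fin_two_of]
    refine ⟨(Matrix.GeneralLinearGroup.mkOfDetNeZero _ hdet)⁻¹, ?_⟩
    have h1 : ((Matrix.GeneralLinearGroup.mkOfDetNeZero _ hdet)⁻¹⁻¹ :
        GL (Fin 2) k) = Matrix.GeneralLinearGroup.mkOfDetNeZero _ hdet := inv_inv _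
    rw [act, h1]
    have h2 : ((Matrix.GeneralLinearGroup.mkOfDetNeZero !![A, B; C, D] hdet :
        GL (Fin 2) k) : Matrix (Fin 2) (Fin 2) k) = !![A, B; C, D] := rfl
    rw [h2]
    congr 1
    have hmul : (((Matrix.GeneralLinearGroup.mkOfDetNeZero !![A, B; C, D] hdet)⁻¹ :
        GL (Fin 2) k) : Matrix (Fin 2) (Fin 2) k) *
        ((Matrix.GeneralLinearGroup.mkOfDetNeZero !![A, B; C, D] hdet :
          GL (Fin 2) k) : Matrix (Fin 2) (Fin 2) k) = 1 := by
      rw [← Matrix.GeneralLinearGroup.coe_mul, inv_mul_cancel,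
        Matrix.GeneralLinearGroup.coe_one]
    rw [h2] at hmul
    have : (((Matrix.GeneralLinearGroup.mkOfDetNeZero _ hdet)⁻¹ :
        GL (Fin 2) k) : Matrix (Fin 2) (Fin 2) k).det * (A * D - B * C) = 1 := by
      rw [← Matrix.det_fin_two_of A B C D, ← Matrix.det_mul, hmul, Matrix.det_one]
    exact eq_inv_of_mul_eq_one_left this

/-- Characterization of the orbit of `v³`. -/
lemma cube_orbit (x : k × k × k × k) :
    (∃ g : GL (Fin 2) k, act ((0 : k), (0 : k), (0 : k), (1 : k)) g = x) ↔
    ∃ c a b : k, c ≠ 0 ∧ (a ≠ 0 ∨ b ≠ 0) ∧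
      x = (c * a ^ 3, 3 * c * a ^ 2 * b, 3 * c * a * b ^ 2, c * b ^ 3) := by
  rw [orbit_iff]
  constructor
  · rintro ⟨A, B, C, D, h, rfl⟩
    refine ⟨(A * D - B * C)⁻¹, B, D, inv_ne_zero h, ?_, ?_⟩
    · by_contra hc
      push_neg at hc
      exact h (by rw [hc.1, hc.2]; ring)
    · rw [subst_mk, smul_mk, Prod.mk.injEq, Prod.mk.injEq, Prod.mk.injEq]
      refine ⟨by ring, by ring, by ring, by ring⟩
  · rintro ⟨c, a, b, hc, hab, rfl⟩
    rcases hab with ha | hb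
    · have h1 : ((0 : k) * b - a * -(c⁻¹ * a⁻¹)) = c⁻¹ := by field_simp; ring
      refine ⟨0, a, -(c⁻¹ * a⁻¹), b, by rw [h1]; exact inv_ne_zero hc, ?_⟩
      rw [subst_mk, smul_mk, h1, inv_inv, Prod.mk.injEq, Prod.mk.injEq, Prod.mk.injEq]
      refine ⟨by ring, by ring, by ring, by ring⟩
    · have h1 : (c⁻¹ * b⁻¹ * b - a * (0 : k)) = c⁻¹ := by field_simp; ring
      refine ⟨c⁻¹ * b⁻¹, a, 0, b, by rw [h1]; exact inv_ne_zero hc, ?_⟩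
      rw [subst_mk, smul_mk, h1, inv_inv, Prod.mk.injEq, Prod.mk.injEq, Prod.mk.injEq]
      refine ⟨by ring, by ring, by ring, by ring⟩

/-- Characterization of the orbit of `uv²`. -/
lemma sq_orbit (x : k × k × k × k) :
    (∃ g : GL (Fin 2) k, act ((0 : k), (0 : k), (1 : k), (0 : k)) g = x) ↔
    ∃ a b c d : k, a * d - b * c ≠ 0 ∧
      x = (a ^ 2 * c, a ^ 2 * d + 2 * a * b * c,
           b ^ 2 * c + 2 * a * b * d, b ^ 2 * d) := by
  rw [orbit_iff]
  constructor
  · rintro ⟨A, B, C, D, h, rfl⟩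
    set e := (A * D - B * C)⁻¹ with he
    have hee : e * (A * D - B * C) = 1 := inv_mul_cancel₀ h
    refine ⟨B, D, e * A, e * C, ?_, ?_⟩
    · have : B * (e * C) - D * (e * A) = -1 := by
        rw [he]; field_simp; ring
      rw [this]; norm_num
    · rw [subst_mk, smul_mk, Prod.mk.injEq, Prod.mk.injEq, Prod.mk.injEq]
      refine ⟨by ring, by ring, by ring, by ring⟩
  · rintro ⟨a, b, c, d, h, rfl⟩
    obtain ⟨δ, hδ⟩ : ∃ δ : k, δ = a * d - b * c := ⟨_, rfl⟩
    rw [← hδ] at h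
    have hδ2 : (δ ^ 2)⁻¹ * δ ^ 2 = 1 := inv_mul_cancel₀ (pow_ne_zero 2 h)
    have h2 : (c * (-δ * b) - -δ * a * d) = δ ^ 2 := by rw [hδ]; ring
    refine ⟨c, -δ * a, d, -δ * b, h2 ▸ pow_ne_zero 2 h, ?_⟩
    rw [subst_mk, smul_mk, h2, Prod.mk.injEq, Prod.mk.injEq, Prod.mk.injEq]
    have key : ∀ E T : k, E = δ ^ 2 * T → (δ ^ 2)⁻¹ * E = T := by
      intro E T hET
      rw [hET, ← mul_assoc, hδ2, one_mul]
    refine ⟨key _ _ (by rw [hδ]; ring), key _ _ (by rw [hδ]; ring),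
      key _ _ (by rw [hδ]; ring), key _ _ (by rw [hδ]; ring)⟩

lemma cubic_root [IsAlgClosed k] {x₁ : k} (h : x₁ ≠ 0) (x₂ x₃ x₄ : k) :
    ∃ r : k, x₁ * r ^ 3 + x₂ * r ^ 2 + x₃ * r + x₄ = 0 := by
  obtain ⟨r, hr⟩ := IsAlgClosed.exists_root
    (Polynomial.C x₁ * Polynomial.X ^ 3 + Polynomial.C x₂ * Polynomial.X ^ 2
      + Polynomial.C x₃ * Polynomial.X + Polynomial.C x₄)
    (by rw [Polynomial.degree_cubic h]; decide)
  refine ⟨r, ?_⟩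
  simpa only [Polynomial.IsRoot, Polynomial.eval_add, Polynomial.eval_mul,
    Polynomial.eval_pow, Polynomial.eval_C, Polynomial.eval_X] using hr

/-- A cubic with a double root ρ and remaining root ω lies in one of the two orbits. -/
lemma double_root {x₁ x₂ x₃ x₄ ρ ω : k} (h1 : x₁ ≠ 0)
    (p2 : x₂ = -(x₁ * (2 * ρ + ω))) (p3 : x₃ = x₁ * (ρ ^ 2 + 2 * ρ * ω))
    (p4 : x₄ = -(x₁ * (ρ ^ 2 * ω))) :
    (∃ g : GL (Fin 2) k, act ((0 : k), (0 : k), (0 : k), (1 : k)) g = (x₁, x₂, x₃, x₄)) ∨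
    (∃ g : GL (Fin 2) k, act ((0 : k), (0 : k), (1 : k), (0 : k)) g = (x₁, x₂, x₃, x₄)) := by
  by_cases hρω : ρ = ω
  · left
    refine (cube_orbit _).2 ⟨x₁, 1, -ρ, h1, Or.inl one_ne_zero, ?_⟩
    subst hρω
    rw [Prod.mk.injEq, Prod.mk.injEq, Prod.mk.injEq]
    exact ⟨by ring, by rw [p2]; ring, by rw [p3]; ring, by rw [p4]; ring⟩
  · right
    refine (sq_orbit _).2 ⟨1, -ρ, x₁, -(x₁ * ω), ?_, ?_⟩
    · have : (1 : k) * -(x₁ * ω) - -ρ * x₁ = x₁ * (ρ - ω) := by ring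
      rw [this]
      exact mul_ne_zero h1 (sub_ne_zero.2 hρω)
    · rw [Prod.mk.injEq, Prod.mk.injEq, Prod.mk.injEq]
      exact ⟨by ring, by rw [p2]; ring, by rw [p3]; ring, by rw [p4]; ring⟩

end Aux

/-- over an algebraically closed field of characteristic 0, the
nonzero binary cubic forms with zero discriminant fall into exactly two orbits
under the twisted `GL₂`-action: the orbit of `v³` (scalar multiples of cubes of
linear forms) and the orbit of `uv²` (forms `ℓ²m` with `ℓ, m` non-proportional
linear forms), and these two orbits are distinct. -/
theorem singular_orbits {k : Type*} [Field k] [IsAlgClosed k] [CharZero k] :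
    (∀ x : k × k × k × k, x ≠ 0 → disc x = 0 →
        (∃ g : GL (Fin 2) k, act ((0 : k), (0 : k), (0 : k), (1 : k)) g = x) ∨
        (∃ g : GL (Fin 2) k, act ((0 : k), (0 : k), (1 : k), (0 : k)) g = x)) ∧
    (∀ x : k × k × k × k,
        (∃ g : GL (Fin 2) k, act ((0 : k), (0 : k), (0 : k), (1 : k)) g = x) ↔
        ∃ c a b : k, c ≠ 0 ∧ (a ≠ 0 ∨ b ≠ 0) ∧
          x = (c * a ^ 3, 3 * c * a ^ 2 * b, 3 * c * a * b ^ 2, c * b ^ 3)) ∧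
    (∀ x : k × k × k × k,
        (∃ g : GL (Fin 2) k, act ((0 : k), (0 : k), (1 : k), (0 : k)) g = x) ↔
        ∃ a b c d : k, a * d - b * c ≠ 0 ∧
          x = (a ^ 2 * c, a ^ 2 * d + 2 * a * b * c,
               b ^ 2 * c + 2 * a * b * d, b ^ 2 * d)) ∧
    ¬∃ g : GL (Fin 2) k,
        act ((0 : k), (0 : k), (0 : k), (1 : k)) g = (0, 0, 1, 0) := by
  refine ⟨?_, cube_orbit, sq_orbit, ?_⟩
  · rintro ⟨x₁, x₂, x₃, x₄⟩ hx hdisc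
    simp only [disc] at hdisc
    by_cases h1 : x₁ = 0
    · subst h1
      by_cases h2 : x₂ = 0
      · subst h2
        by_cases h3 : x₃ = 0
        · subst h3
          have h4 : x₄ ≠ 0 := by
            intro h4; apply hx; rw [h4]; rfl
          left
          refine (cube_orbit _).2 ⟨x₄, 0, 1, h4, Or.inr one_ne_zero, ?_⟩
          rw [Prod.mk.injEq, Prod.mk.injEq, Prod.mk.injEq]
          exact ⟨by ring, by ring, by ring, by ring⟩
        · right
          refine (sq_orbit _).2 ⟨0, 1, x₃, x₄, ?_, ?_⟩
          · have : (0 : k) * x₄ - 1 * x₃ = -x₃ := by ring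
            rw [this]
            exact neg_ne_zero.2 h3
          · rw [Prod.mk.injEq, Prod.mk.injEq, Prod.mk.injEq]
            exact ⟨by ring, by ring, by ring, by ring⟩
      · right
        have hkey : x₃ ^ 2 = 4 * x₂ * x₄ := by
          have h' : x₂ ^ 2 * (x₃ ^ 2 - 4 * x₂ * x₄) = 0 := by linear_combination hdisc
          rcases mul_eq_zero.1 h' with h'' | h''
          · exact absurd ((pow_eq_zero_iff two_ne_zero).1 h'') h2
          · linear_combination h''
        refine (sq_orbit _).2 ⟨1, x₃ / (2 * x₂), 0, x₂, ?_, ?_⟩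
        · have : (1 : k) * x₂ - x₃ / (2 * x₂) * 0 = x₂ := by ring
          rw [this]; exact h2
        · rw [Prod.mk.injEq, Prod.mk.injEq, Prod.mk.injEq]
          refine ⟨by ring, by ring, ?_, ?_⟩
          · field_simp
            ring
          · field_simp
            linear_combination -hkey
    · obtain ⟨r, hr⟩ := cubic_root h1 x₂ x₃ x₄
      obtain ⟨z, hz⟩ := IsAlgClosed.exists_pow_nat_eq
        ((x₂ + x₁ * r) ^ 2 - 4 * x₁ * (x₃ + (x₂ + x₁ * r) * r)) (two_pos)
      obtain ⟨s, hs⟩ : ∃ s : k, s = (-(x₂ + x₁ * r) + z) / (2 * x₁) := ⟨_, rfl⟩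
      obtain ⟨w, hw⟩ : ∃ w : k, w = (-(x₂ + x₁ * r) - z) / (2 * x₁) := ⟨_, rfl⟩
      have hsum : x₁ * (s + w) = -(x₂ + x₁ * r) := by
        rw [hs, hw]; field_simp; ring
      have hprod : x₁ * (s * w) = x₃ + (x₂ + x₁ * r) * r := by
        rw [hs, hw]
        field_simp
        linear_combination -hz
      have e2 : x₂ = -(x₁ * (r + s + w)) := by linear_combination hsum
      have e3 : x₃ = x₁ * (r * s + r * w + s * w) := by
        linear_combination -r * hsum - hprod
      have e4 : x₄ = -(x₁ * (r * s * w)) := by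
        linear_combination r * hprod + hr
      have hfac : x₁ ^ 4 * ((r - s) * (s - w) * (r - w)) ^ 2 = 0 := by
        rw [e2, e3, e4] at hdisc
        linear_combination hdisc
      have hprod0 : (r - s) * (s - w) * (r - w) = 0 := by
        rcases mul_eq_zero.1 hfac with h' | h'
        · exact absurd ((pow_eq_zero_iff (by norm_num : (4:ℕ) ≠ 0)).1 h') h1
        · exact (pow_eq_zero_iff two_ne_zero).1 h'
      rcases mul_eq_zero.1 hprod0 with h' | h'
      · rcases mul_eq_zero.1 h' with h'' | h''
        · -- r = s : double root r, other root w
          exact double_root (ρ := r) (ω := w) h1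
            (by linear_combination hsum + x₁ * h'')
            (by linear_combination -r * hsum - hprod - x₁ * (r + w) * h'')
            (by linear_combination r * hprod + hr + x₁ * r * w * h'')
        · -- s = w : double root s, other root r
          exact double_root (ρ := s) (ω := r) h1
            (by linear_combination hsum + x₁ * h'')
            (by linear_combination -r * hsum - hprod - x₁ * (r + s) * h'')
            (by linear_combination r * hprod + hr + x₁ * r * s * h'')
      · -- r = w : double root r, other root s
        exact double_root (ρ := r) (ω := s) h1
          (by linear_combination hsum + x₁ * h')
          (by linear_combination -r * hsum - hprod - x₁ * (r + s) * h')
          (by linear_combination r * hprod + hr + x₁ * r * s * h')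
  · rintro h
    obtain ⟨c, a, b, hc, hab, heq⟩ := (cube_orbit _).1 h
    rw [Prod.mk.injEq, Prod.mk.injEq, Prod.mk.injEq] at heq
    obtain ⟨h1', h2', h3', h4'⟩ := heq
    have hb : b = 0 := by
      rcases mul_eq_zero.1 h4'.symm with h' | h'
      · exact absurd h' hc
      · exact (pow_eq_zero_iff (three_ne_zero)).1 h'
    rw [hb] at h3'
    simp at h3'
end
end
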